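/- There exists N such that for all n ≥ N and any two distinct vertices u, v ∈ P̄₀: P( |Γ₁^{G₁}(u) ∩ Γ₁^{G₂}(v) ∩ R̄| ≤ 4·κ·n^{γ(3−β)}·s² ) ≥ 1 − n^{−4}, where R̄ = { i : w_i ≤ (1+2δ)·n^γ }. -/

import Mathlib

open MeasureTheory ProbabilityTheory Filter

noncomputable section

/-- The Chung–Lu weight of vertex `i : Fin n` (representing the index `i+1 ∈ {1,…,n}`),
with `i₀ = n·((β−2)·w̄/((β−1)·w_max(n)))^{β−1}`. -/
def clWeight (wbar β : ℝ) (wmax : ℕ → ℝ) (n : ℕ) (i : Fin n) : ℝ :=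
  wbar * ((β - 2) / (β - 1)) *
    ((n : ℝ) / (((i : ℕ) : ℝ) + 1 +
      (n : ℝ) * (((β - 2) * wbar / ((β - 1) * wmax n)) ^ (β - 1)))) ^ (1 / (β - 1))

/-- `α_k = n^γ / 2^k` for an integer `k`. -/
def alphaZ (γ : ℝ) (n : ℕ) (k : ℤ) : ℝ := (n : ℝ) ^ γ / 2 ^ k

/-- The constant `C = (2^{β−1}−1)·((β−2)·w̄/(β−1))^{β−1}`. -/
def Cconst (wbar β : ℝ) : ℝ := (2 ^ (β - 1) - 1) * ((β - 2) * wbar / (β - 1)) ^ (β - 1)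

/-- The constant `κ = (1+2δ)²·2^{5−β}·C/((2^{3−β}−1)·w̄)` with `δ = 1/8`. -/
def kappa (wbar β : ℝ) : ℝ :=
  (1 + 2 * (1/8 : ℝ)) ^ 2 * 2 ^ (5 - β) * Cconst wbar β / ((2 ^ (3 - β) - 1) * wbar)

/-- `k* = ⌊log₂( n^γ·(C·s²/(192·w̄·log n))^{1/(3−β)} )⌋`. -/
def kstar (wbar β s γ : ℝ) (n : ℕ) : ℤ :=
  ⌊Real.logb 2 ((n : ℝ) ^ γ *
      (Cconst wbar β * s ^ 2 / (192 * wbar * Real.log n)) ^ (1 / (3 - β)))⌋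

/-- `K = ⌈γ·log₂ n⌉`, the number of slices. -/
def Kconst (γ : ℝ) (n : ℕ) : ℤ := ⌈γ * Real.logb 2 n⌉

/-- The slice `P_k = { i : α_k ≤ w_i ≤ α_{k−1} }` for `k : ℕ`, with `α_{−1} = +∞` (i.e. for
`k = 0` there is no upper constraint). -/
def Pslice (wbar β γ : ℝ) (wmax : ℕ → ℝ) (n : ℕ) (k : ℕ) : Set (Fin n) :=
  {i | alphaZ γ n k ≤ clWeight wbar β wmax n i ∧
    ∀ j : ℕ, k = j + 1 → clWeight wbar β wmax n i ≤ alphaZ γ n j}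

/-- The slice `P_k = { i : α_k ≤ w_i ≤ α_{k−1} }` for an integer index `k`. -/
def PsliceZ (wbar β γ : ℝ) (wmax : ℕ → ℝ) (n : ℕ) (k : ℤ) : Set (Fin n) :=
  {i | alphaZ γ n k ≤ clWeight wbar β wmax n i ∧
    clWeight wbar β wmax n i ≤ alphaZ γ n (k - 1)}

/-- The enlarged slice `P̄_k = { i : (1−2δ)·α_k ≤ w_i ≤ (1+2δ)·α_{k−1} }` with `δ = 1/8`
(no upper constraint for `k = 0` since `α_{−1} = +∞`). -/
def PbarSlice (wbar β γ : ℝ) (wmax : ℕ → ℝ) (n : ℕ) (k : ℕ) : Set (Fin n) :=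
  {i | (1 - 2 * (1/8 : ℝ)) * alphaZ γ n k ≤ clWeight wbar β wmax n i ∧
    ∀ j : ℕ, k = j + 1 → clWeight wbar β wmax n i ≤ (1 + 2 * (1/8 : ℝ)) * alphaZ γ n j}

/-- The degree-based slice `P̂_k^G = { u : (1−δ)·α_k·s ≤ |Γ₁^G(u)| ≤ (1+δ)·α_{k−1}·s }`
with `δ = 1/8` (no upper constraint for `k = 0` since `α_{−1} = +∞`). -/
def PhatSlice (γ s : ℝ) {n : ℕ} (G : SimpleGraph (Fin n)) (k : ℕ) : Set (Fin n) :=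
  {u | (1 - (1/8 : ℝ)) * alphaZ γ n k * s ≤ ((G.neighborSet u).ncard : ℝ) ∧
    ∀ j : ℕ, k = j + 1 → ((G.neighborSet u).ncard : ℝ) ≤ (1 + (1/8 : ℝ)) * alphaZ γ n j * s}

/-- The subgraph of `G` induced on the vertex set `V` (kept as a graph on all of `Fin n`:
only edges with both endpoints in `V` are retained, so graph distances between vertices of `V`
agree with those in the induced subgraph). -/
def restrictG {n : ℕ} (G : SimpleGraph (Fin n)) (V : Set (Fin n)) : SimpleGraph (Fin n) where
  Adj u v := G.Adj u v ∧ u ∈ V ∧ v ∈ V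
  symm := ⟨fun u v h => ⟨h.1.symm, h.2.2, h.2.1⟩⟩
  loopless := ⟨fun u h => G.loopless.irrefl u h.1⟩

/-- Condition (★):
`n^{γ((3−β)(D−1)+1)} ≤ (C·s·(2^{3−β}−1)/(20·2^{3−β}))·(C·s²/(12·κ²·w̄))^D·n/(log n)^{3−β}`. -/
def starCond (wbar β s γ : ℝ) (D : ℕ) (n : ℕ) : Prop :=
  (n : ℝ) ^ (γ * ((3 - β) * ((D : ℝ) - 1) + 1)) ≤
    Cconst wbar β * s * (2 ^ (3 - β) - 1) / (20 * 2 ^ (3 - β)) *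
      (Cconst wbar β * s ^ 2 / (12 * kappa wbar β ^ 2 * wbar)) ^ D *
      (n : ℝ) / Real.log n ^ (3 - β)

/-- A pair of edge-correlated Chung–Lu random graphs `G 0, G 1` on `{1,…,n}`:
for each unordered pair `e` of distinct vertices there are events `A e`, `B 0 e`, `B 1 e`
with `P(A e) = w_i·w_j/(n·w̄)`, `P(B j e) = s`, the whole family being mutually independent,
and `G j` has edge set `{e : A e ∩ B j e occurs}`. -/
structure ChungLuPair (wbar β s : ℝ) (wmax : ℕ → ℝ) (n : ℕ)
    (Ω : Type) [MeasurableSpace Ω] where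
  μ : Measure Ω
  prob : IsProbabilityMeasure μ
  A : Sym2 (Fin n) → Set Ω
  B : Fin 2 → Sym2 (Fin n) → Set Ω
  Ameas : ∀ e, MeasurableSet (A e)
  Bmeas : ∀ j e, MeasurableSet (B j e)
  hA : ∀ u v : Fin n, u ≠ v →
    μ (A (s(u, v))) =
      ENNReal.ofReal (clWeight wbar β wmax n u * clWeight wbar β wmax n v / (n * wbar))
  hB : ∀ (j : Fin 2) (u v : Fin n), u ≠ v → μ (B j (s(u, v))) = ENNReal.ofReal s
  indep : iIndepSet
    (fun p : Sym2 (Fin n) × Option (Fin 2) => p.2.elim (A p.1) (fun j => B j p.1)) μ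
  G : Fin 2 → Ω → SimpleGraph (Fin n)
  hG : ∀ (j : Fin 2) (ω : Ω) (u v : Fin n),
    (G j ω).Adj u v ↔ u ≠ v ∧ ω ∈ A (s(u, v)) ∧ ω ∈ B j (s(u, v))

/-- A single Chung–Lu random graph on `{1,…,n}` with edge probabilities `w_i·w_j·t/(n·w̄)`,
independently across unordered pairs of distinct vertices. -/
structure ChungLuSingle (wbar β t : ℝ) (wmax : ℕ → ℝ) (n : ℕ)
    (Ω : Type) [MeasurableSpace Ω] where
  μ : Measure Ω
  prob : IsProbabilityMeasure μ
  E : Sym2 (Fin n) → Set Ω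
  Emeas : ∀ e, MeasurableSet (E e)
  hE : ∀ u v : Fin n, u ≠ v →
    μ (E (s(u, v))) =
      ENNReal.ofReal (clWeight wbar β wmax n u * clWeight wbar β wmax n v * t / (n * wbar))
  indep : iIndepSet E μ
  G : Ω → SimpleGraph (Fin n)
  hG : ∀ (ω : Ω) (u v : Fin n), (G ω).Adj u v ↔ u ≠ v ∧ ω ∈ E (s(u, v))

/-- The random sets `S_0 = P_{k*}` and
`S_h = { u ∈ P_{k*+h} : |Γ₁^{G₁}(u) ∩ Γ₁^{G₂}(u) ∩ S_{h−1}| ≥ 3 }` for `h ≥ 1`. -/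
def Sset (wbar β γ : ℝ) (wmax : ℕ → ℝ) (n : ℕ) (kst : ℤ)
    (G1 G2 : SimpleGraph (Fin n)) : ℕ → Set (Fin n)
  | 0 => PsliceZ wbar β γ wmax n kst
  | h + 1 => {u | u ∈ PsliceZ wbar β γ wmax n (kst + (h : ℤ) + 1) ∧
      3 ≤ (G1.neighborSet u ∩ G2.neighborSet u ∩
        Sset wbar β γ wmax n kst G1 G2 h).ncard}

/-! ### Auxiliary lemmas -/


/-- helper: equality via logs -/
lemma eq_of_log_eq {X Y : ℝ} (hX : 0 < X) (hY : 0 < Y) (h : Real.log X = Real.log Y) : X = Y := by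
  rw [← Real.exp_log hX, h, Real.exp_log hY]

lemma pointwise_dyadic {T w : ℝ} {K : ℕ} (hT : 0 < T) (hw0 : 0 < w) (hwT : w ≤ T)
    (hK : T / 2 ^ K < w) :
    w ^ 2 ≤ ∑ k ∈ Finset.range K, (T / 2 ^ k) ^ 2 * (if T / 2 ^ (k + 1) < w then 1 else 0) := by
  classical
  have hex : ∃ k, T / 2 ^ k < w := ⟨K, hK⟩
  have hm : T / 2 ^ (Nat.find hex) < w := Nat.find_spec hex
  set m := Nat.find hex with hmdef
  have hm0 : m ≠ 0 := by
    intro h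
    rw [h] at hm
    norm_num at hm
    linarith
  have hmK : m ≤ K := Nat.find_le hK
  have hprev : ¬ (T / 2 ^ (m - 1) < w) := Nat.find_min hex (by omega)
  push_neg at hprev
  have hk : m - 1 ∈ Finset.range K := Finset.mem_range.mpr (by omega)
  have hterm : w ^ 2 ≤ (T / 2 ^ (m - 1)) ^ 2 * (if T / 2 ^ (m - 1 + 1) < w then 1 else 0) := by
    rw [if_pos (by rw [show m - 1 + 1 = m by omega]; exact hm), mul_one]
    nlinarith [hprev, hw0.le]
  refine hterm.trans (Finset.single_le_sum
    (f := fun k => (T / 2 ^ k) ^ 2 * (if T / 2 ^ (k + 1) < w then 1 else 0))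
    (fun k _ => ?_) hk)
  have h0 : (0:ℝ) ≤ (T / 2 ^ k) ^ 2 := sq_nonneg _
  show 0 ≤ (T / 2 ^ k) ^ 2 * (if T / 2 ^ (k + 1) < w then 1 else 0)
  split <;> simp [h0]

lemma dyadic_sum {ι : Type*} (J : Finset ι) (w : ι → ℝ) (T Mc q : ℝ)
    (hT : 0 < T) (hM : 0 ≤ Mc) (hq1 : 1 < q) (hq2 : q < 2)
    (hw : ∀ i ∈ J, 0 < w i ∧ w i ≤ T)
    (count : ∀ α : ℝ, 0 < α → ((J.filter fun i => α < w i).card : ℝ) ≤ Mc * α⁻¹ ^ q) :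
    ∑ i ∈ J, w i ^ 2 ≤ (2:ℝ) ^ q * Mc * T ^ (2 - q) / (1 - (2:ℝ) ^ (q - 2)) := by
  classical
  have hr0 : (0:ℝ) < (2:ℝ) ^ (q - 2) := Real.rpow_pos_of_pos two_pos _
  have hr1 : (2:ℝ) ^ (q - 2) < 1 :=
    Real.rpow_lt_one_of_one_lt_of_neg one_lt_two (by linarith)
  have h2q : (0:ℝ) < (2:ℝ) ^ q := Real.rpow_pos_of_pos two_pos _
  have hT2 : (0:ℝ) < T ^ (2 - q) := Real.rpow_pos_of_pos hT _
  have hRHS : 0 ≤ (2:ℝ) ^ q * Mc * T ^ (2 - q) / (1 - (2:ℝ) ^ (q - 2)) := by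
    apply div_nonneg
    · exact mul_nonneg (mul_nonneg h2q.le hM) hT2.le
    · linarith
  rcases J.eq_empty_or_nonempty with hJe | hJne
  · simpa [hJe] using hRHS
  obtain ⟨i₀, hi₀, hmin⟩ := J.exists_min_image w hJne
  obtain ⟨K, hK⟩ := pow_unbounded_of_one_lt (T / w i₀) (one_lt_two (α := ℝ))
  have hlow : ∀ i ∈ J, T / 2 ^ K < w i := by
    intro i hi
    have h1 : 0 < w i₀ := (hw _ hi₀).1
    have h2 : T / 2 ^ K < w i₀ := by
      rw [div_lt_iff₀ (by positivity)]
      rw [div_lt_iff₀ h1] at hK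
      nlinarith [hK]
    exact h2.trans_le (hmin i hi)
  have hpt : ∀ i ∈ J, w i ^ 2 ≤
      ∑ k ∈ Finset.range K, (T / 2 ^ k) ^ 2 * (if T / 2 ^ (k + 1) < w i then 1 else 0) :=
    fun i hi => pointwise_dyadic hT (hw i hi).1 (hw i hi).2 (hlow i hi)
  calc ∑ i ∈ J, w i ^ 2
      ≤ ∑ i ∈ J, ∑ k ∈ Finset.range K, (T / 2 ^ k) ^ 2 *
          (if T / 2 ^ (k + 1) < w i then 1 else 0) := Finset.sum_le_sum hpt
    _ = ∑ k ∈ Finset.range K, (T / 2 ^ k) ^ 2 *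
          ((J.filter fun i => T / 2 ^ (k + 1) < w i).card : ℝ) := by
        rw [Finset.sum_comm]
        refine Finset.sum_congr rfl fun k _ => ?_
        rw [← Finset.mul_sum, Finset.sum_boole]
    _ ≤ ∑ k ∈ Finset.range K, (T / 2 ^ k) ^ 2 * (Mc * ((T / 2 ^ (k + 1))⁻¹) ^ q) := by
        refine Finset.sum_le_sum fun k _ => ?_
        exact mul_le_mul_of_nonneg_left (count (T / 2 ^ (k + 1)) (by positivity)) (by positivity)
    _ = ∑ k ∈ Finset.range K, ((2:ℝ) ^ q * Mc * T ^ (2 - q)) * ((2:ℝ) ^ (q - 2)) ^ k := by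
        refine Finset.sum_congr rfl fun k _ => ?_
        rcases eq_or_lt_of_le hM with hM0 | hM0
        · simp [← hM0]
        have ha : (0:ℝ) < T / 2 ^ (k + 1) := by positivity
        have h2k : (0:ℝ) < (2:ℝ) ^ (k+1) := by positivity
        have h2k' : (0:ℝ) < (2:ℝ) ^ k := by positivity
        rw [show (T / 2 ^ k) ^ 2 * (Mc * ((T / 2 ^ (k + 1))⁻¹) ^ q)
              = Mc * ((T / 2 ^ k) ^ 2 * ((T / 2 ^ (k + 1))⁻¹) ^ q) by ring,
            show ((2:ℝ) ^ q * Mc * T ^ (2 - q)) * ((2:ℝ) ^ (q - 2)) ^ k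
              = Mc * ((2:ℝ) ^ q * T ^ (2 - q) * ((2:ℝ) ^ (q - 2)) ^ k) by ring]
        congr 1
        apply eq_of_log_eq
        · have : (0:ℝ) < ((T / 2 ^ (k + 1))⁻¹) ^ q := Real.rpow_pos_of_pos (by positivity) _
          positivity
        · have : (0:ℝ) < ((2:ℝ) ^ (q - 2)) ^ k := pow_pos hr0 _
          positivity
        rw [Real.log_mul (by positivity) (by positivity),
            Real.log_mul (by positivity) (by positivity),
            Real.log_mul (by positivity) (by positivity),
            Real.log_pow, Real.log_pow, Real.log_rpow (by positivity),
            Real.log_rpow two_pos, Real.log_rpow hT, Real.log_inv,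
            Real.log_div hT.ne' h2k.ne', Real.log_div hT.ne' h2k'.ne',
            Real.log_pow, Real.log_pow, Real.log_rpow two_pos]
        push_cast
        ring
    _ = ((2:ℝ) ^ q * Mc * T ^ (2 - q)) * ∑ k ∈ Finset.range K, ((2:ℝ) ^ (q - 2)) ^ k := by
        rw [Finset.mul_sum]
    _ ≤ ((2:ℝ) ^ q * Mc * T ^ (2 - q)) * (1 - (2:ℝ) ^ (q - 2))⁻¹ := by
        refine mul_le_mul_of_nonneg_left ?_ (mul_nonneg (mul_nonneg h2q.le hM) hT2.le)
        exact sum_le_hasSum (Finset.range K) (fun k _ => pow_nonneg hr0.le k)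
          (hasSum_geometric_of_lt_one hr0.le hr1)
    _ = (2:ℝ) ^ q * Mc * T ^ (2 - q) / (1 - (2:ℝ) ^ (q - 2)) := (div_eq_mul_inv _ _).symm



section WeightLemmas

variable {wbar β : ℝ} {wmax : ℕ → ℝ} {n : ℕ}

lemma clWeight_pos (hwbar : 0 < wbar) (hβl : 2 < β) (hβu : β < 3)
    (hwm : 0 < wmax n) (hn : 0 < n) (i : Fin n) : 0 < clWeight wbar β wmax n i := by
  have h1 : (0:ℝ) < β - 1 := by linarith
  have h2 : (0:ℝ) < β - 2 := by linarith
  have hn' : (0:ℝ) < n := by exact_mod_cast hn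
  have hq : (0:ℝ) < (β - 2) * wbar / ((β - 1) * wmax n) := by positivity
  have hx : (0:ℝ) < ((i : ℕ) : ℝ) + 1 +
      (n : ℝ) * (((β - 2) * wbar / ((β - 1) * wmax n)) ^ (β - 1)) := by
    have := Real.rpow_pos_of_pos hq (β - 1)
    positivity
  exact mul_pos (mul_pos hwbar (div_pos h2 h1))
    (Real.rpow_pos_of_pos (div_pos hn' hx) _)

lemma clWeight_le_wmax (hwbar : 0 < wbar) (hβl : 2 < β) (hβu : β < 3)
    (hwm : 0 < wmax n) (hn : 0 < n) (i : Fin n) : clWeight wbar β wmax n i ≤ wmax n := by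
  have h1 : (0:ℝ) < β - 1 := by linarith
  have h2 : (0:ℝ) < β - 2 := by linarith
  have hn' : (0:ℝ) < n := by exact_mod_cast hn
  set q : ℝ := (β - 2) * wbar / ((β - 1) * wmax n) with hqdef
  have hq : 0 < q := by positivity
  have hi0 : (0:ℝ) < (n : ℝ) * q ^ (β - 1) := by
    have := Real.rpow_pos_of_pos hq (β - 1)
    positivity
  set x : ℝ := ((i : ℕ) : ℝ) + 1 + (n : ℝ) * q ^ (β - 1) with hxdef
  have hx : (0:ℝ) < x := by positivity
  have hxge : (n : ℝ) * q ^ (β - 1) ≤ x := by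
    have : (0:ℝ) ≤ ((i : ℕ) : ℝ) + 1 := by positivity
    linarith
  have hqb : (0:ℝ) < q ^ (β - 1) := Real.rpow_pos_of_pos hq (β - 1)
  have hdiv : (n : ℝ) / x ≤ (q ^ (β - 1))⁻¹ := by
    rw [div_le_iff₀ hx, inv_mul_eq_div, le_div_iff₀ hqb]
    exact hxge
  have hkey : ((n : ℝ) / x) ^ (1 / (β - 1)) ≤ q⁻¹ := by
    have h1' : ((q ^ (β - 1))⁻¹ : ℝ) = q ^ (-(β - 1)) := (Real.rpow_neg hq.le _).symm
    calc ((n : ℝ) / x) ^ (1 / (β - 1)) ≤ ((q ^ (β - 1))⁻¹) ^ (1 / (β - 1)) :=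
          Real.rpow_le_rpow (by positivity) hdiv (by positivity)
      _ = q⁻¹ := by
          rw [h1', ← Real.rpow_mul hq.le]
          rw [show -(β - 1) * (1 / (β - 1)) = -1 by field_simp]
          exact Real.rpow_neg_one q
  have hfin : wbar * ((β - 2) / (β - 1)) * q⁻¹ = wmax n := by
    rw [hqdef]
    field_simp
  calc clWeight wbar β wmax n i
      = wbar * ((β - 2) / (β - 1)) * ((n : ℝ) / x) ^ (1 / (β - 1)) := rfl
    _ ≤ wbar * ((β - 2) / (β - 1)) * q⁻¹ :=
        mul_le_mul_of_nonneg_left hkey (by positivity)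
    _ = wmax n := hfin

lemma clWeight_count (hwbar : 0 < wbar) (hβl : 2 < β) (hβu : β < 3)
    (hwm : 0 < wmax n) (hn : 0 < n) (α : ℝ) (hα : 0 < α) :
    ((Finset.univ.filter (fun i : Fin n => α < clWeight wbar β wmax n i)).card : ℝ) ≤
      (n : ℝ) * ((β - 2) * wbar / (β - 1)) ^ (β - 1) * (α⁻¹) ^ (β - 1) := by
  classical
  have h1 : (0:ℝ) < β - 1 := by linarith
  have h2 : (0:ℝ) < β - 2 := by linarith
  have hn' : (0:ℝ) < n := by exact_mod_cast hn
  set c : ℝ := (β - 2) * wbar / (β - 1) with hcdef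
  have hc : 0 < c := by positivity
  set Mr : ℝ := (n : ℝ) * c ^ (β - 1) * (α⁻¹) ^ (β - 1) with hMdef
  have hM0 : 0 ≤ Mr := by
    have h3 := Real.rpow_nonneg hc.le (β - 1)
    have h4 := Real.rpow_nonneg (inv_nonneg.mpr hα.le) (β - 1)
    positivity
  have hclaim : ∀ i : Fin n, α < clWeight wbar β wmax n i → ((i : ℕ) : ℝ) + 1 < Mr := by
    intro i hi
    set q : ℝ := (β - 2) * wbar / ((β - 1) * wmax n) with hqdef
    have hq : 0 < q := by positivity
    have hqb : (0:ℝ) < q ^ (β - 1) := Real.rpow_pos_of_pos hq _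
    set x : ℝ := ((i : ℕ) : ℝ) + 1 + (n : ℝ) * q ^ (β - 1) with hxdef
    have hx : (0:ℝ) < x := by positivity
    have hcl : clWeight wbar β wmax n i = c * ((n : ℝ) / x) ^ (1 / (β - 1)) := by
      rw [hcdef]
      show wbar * ((β - 2) / (β - 1)) * _ = _
      rw [hxdef, hqdef]; ring
    rw [hcl] at hi
    have hstep : α / c < ((n : ℝ) / x) ^ (1 / (β - 1)) := by
      rw [div_lt_iff₀ hc]
      nlinarith [hi]
    have hrp : (α / c) ^ (β - 1) < (n : ℝ) / x := by
      calc (α / c) ^ (β - 1) < (((n : ℝ) / x) ^ (1 / (β - 1))) ^ (β - 1) :=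
            Real.rpow_lt_rpow (by positivity) hstep h1
        _ = ((n : ℝ) / x) ^ ((1 / (β - 1)) * (β - 1)) := (Real.rpow_mul (by positivity) _ _).symm
        _ = (n : ℝ) / x := by
            rw [show (1 / (β - 1)) * (β - 1) = 1 by field_simp, Real.rpow_one]
    have hαc : (0:ℝ) < (α / c) ^ (β - 1) := Real.rpow_pos_of_pos (by positivity) _
    have hxlt : x < (n : ℝ) / (α / c) ^ (β - 1) := by
      rw [lt_div_iff₀ hαc]
      rw [lt_div_iff₀ hx] at hrp
      nlinarith [hrp]
    have hMr : (n : ℝ) / (α / c) ^ (β - 1) = Mr := by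
      rw [Real.div_rpow hα.le hc.le, hMdef, Real.inv_rpow hα.le]
      have hαb : (0:ℝ) < α ^ (β - 1) := Real.rpow_pos_of_pos hα _
      field_simp
    have hige : ((i : ℕ) : ℝ) + 1 ≤ x := by
      have : (0:ℝ) ≤ (n : ℝ) * q ^ (β - 1) := by positivity
      linarith
    linarith [hMr ▸ hxlt]
  calc ((Finset.univ.filter (fun i : Fin n => α < clWeight wbar β wmax n i)).card : ℝ)
      ≤ ((Finset.range ⌊Mr⌋₊).card : ℝ) := by
        have hcard : (Finset.univ.filter
            (fun i : Fin n => α < clWeight wbar β wmax n i)).card ≤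
            (Finset.range ⌊Mr⌋₊).card := by
          apply Finset.card_le_card_of_injOn (fun i : Fin n => (i : ℕ))
          · intro i hi
            simp only [Finset.coe_filter, Set.mem_setOf_eq, Finset.mem_filter] at hi
            have h5 : ((i : ℕ) : ℝ) + 1 ≤ Mr := (hclaim i hi.2).le
            have h6 : ((i : ℕ) + 1 : ℕ) ≤ ⌊Mr⌋₊ := Nat.le_floor (by push_cast; linarith)
            exact Finset.mem_range.mpr (by show (i : ℕ) < ⌊Mr⌋₊; omega)
          · exact fun a _ b _ hab => Fin.val_injective hab
        exact Nat.cast_le.mpr hcard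
    _ ≤ Mr := by
        rw [Finset.card_range]
        exact Nat.floor_le hM0

end WeightLemmas


lemma sigma_disjoint {n : ℕ} (u v x y : Fin n) (huv : u ≠ v) (hxu : x ≠ u) (hxv : x ≠ v)
    (hyu : y ≠ u) (hyv : y ≠ v) (hxy : x ≠ y) :
    Disjoint
      ({(s(u,x), (none : Option (Fin 2))), (s(u,x), some 0),
        (s(v,x), none), (s(v,x), some 1)} : Finset (Sym2 (Fin n) × Option (Fin 2)))
      ({(s(u,y), none), (s(u,y), some 0),
        (s(v,y), none), (s(v,y), some 1)}) := by
  have huv' := huv.symm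
  have hxu' := hxu.symm
  have hxv' := hxv.symm
  have hyu' := hyu.symm
  have hyv' := hyv.symm
  have hxy' := hxy.symm
  rw [Finset.disjoint_left]
  intro a ha hb
  simp only [Finset.mem_insert, Finset.mem_singleton] at ha hb
  rcases ha with h|h|h|h <;> subst h <;>
    simp only [Prod.mk.injEq, Sym2.eq_iff] at hb <;> tauto


set_option maxHeartbeats 2000000 in
theorem statement_17
    (wbar β s γ : ℝ) (hwbar : 0 < wbar) (hβl : 2 < β) (hβu : β < 3)
    (hs0 : 0 < s) (hs1 : s ≤ 1) (hγ0 : 0 < γ) (hγh : γ < 1/2)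
    (wmax : ℕ → ℝ)
    (hwmax : ∀ n : ℕ, 2 ≤ n →
      wbar ≤ wmax n ∧ wmax n ≤ Real.sqrt (n * wbar) ∧ (n : ℝ) ^ γ ≤ wmax n)
    (Ω : ℕ → Type) [∀ n, MeasurableSpace (Ω n)]
    (M : ∀ n : ℕ, 2 ≤ n → ChungLuPair wbar β s wmax n (Ω n))
 :
    ∃ N : ℕ, ∀ (n : ℕ) (hn : 2 ≤ n), N ≤ n →
      ∀ u v : Fin n, u ≠ v →
        (1 - 2 * (1/8 : ℝ)) * (n : ℝ) ^ γ ≤ clWeight wbar β wmax n u →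
        (1 - 2 * (1/8 : ℝ)) * (n : ℝ) ^ γ ≤ clWeight wbar β wmax n v →
      1 - ((n : ℝ) ^ 4)⁻¹ ≤
        ((M n hn).μ {ω |
          ((((M n hn).G 0 ω).neighborSet u ∩ ((M n hn).G 1 ω).neighborSet v ∩
              {i : Fin n | clWeight wbar β wmax n i ≤
                (1 + 2 * (1/8 : ℝ)) * (n : ℝ) ^ γ}).ncard : ℝ) ≤
            4 * kappa wbar β * (n : ℝ) ^ (γ * (3 - β)) * s ^ 2}).toReal := by
  classical
  have hβ1 : (0:ℝ) < β - 1 := by linarith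
  have hβ2 : (0:ℝ) < β - 2 := by linarith
  have hβ3 : (0:ℝ) < 3 - β := by linarith
  have hc0 : 0 < γ * (3 - β) := mul_pos hγ0 hβ3
  have hCpos : 0 < Cconst wbar β := by
    unfold Cconst
    have h1 : (1:ℝ) < (2:ℝ) ^ (β - 1) := by
      rw [Real.one_lt_rpow_iff_of_pos two_pos]; exact Or.inl ⟨one_lt_two, hβ1⟩
    have h2 : (0:ℝ) < ((β - 2) * wbar / (β - 1)) ^ (β - 1) :=
      Real.rpow_pos_of_pos (by positivity) _
    nlinarith
  have hg1 : (1:ℝ) < (2:ℝ) ^ (3 - β) := by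
    rw [Real.one_lt_rpow_iff_of_pos two_pos]; exact Or.inl ⟨one_lt_two, hβ3⟩
  have hκ : 0 < kappa wbar β := by
    unfold kappa
    have h2 : (0:ℝ) < (2:ℝ) ^ (5 - β) := Real.rpow_pos_of_pos two_pos _
    have h3 : (0:ℝ) < (2:ℝ) ^ (3 - β) - 1 := by linarith
    positivity
  obtain ⟨N₀, hN₀⟩ : ∃ N₀ : ℕ, ∀ n : ℕ, N₀ ≤ n →
      8 * Real.log n ≤ kappa wbar β * (n:ℝ) ^ (γ * (3 - β)) * s ^ 2 := by
    have h := (isLittleO_log_rpow_atTop hc0).def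
      (show (0:ℝ) < kappa wbar β * s ^ 2 / 8 by positivity)
    rw [Filter.eventually_atTop] at h
    obtain ⟨x₀, hx₀⟩ := h
    refine ⟨max 1 ⌈x₀⌉₊, fun n hn => ?_⟩
    have hn1 : 1 ≤ n := le_trans (le_max_left _ _) hn
    have hn1' : (1:ℝ) ≤ (n:ℝ) := by exact_mod_cast hn1
    have hx : x₀ ≤ (n:ℝ) := by
      have h5 : (⌈x₀⌉₊ : ℝ) ≤ (n:ℝ) := by exact_mod_cast le_trans (le_max_right _ _) hn
      exact (Nat.le_ceil x₀).trans h5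
    have h2 := hx₀ (n:ℝ) hx
    rw [Real.norm_eq_abs, Real.norm_eq_abs, abs_of_nonneg (Real.log_nonneg hn1'),
        abs_of_nonneg (Real.rpow_nonneg (by positivity) _)] at h2
    nlinarith [h2]
  refine ⟨max 2 N₀, fun n hn hNn u v huv hwu hwv => ?_⟩
  clear hwu hwv
  have hnN₀ : N₀ ≤ n := le_trans (le_max_right _ _) hNn
  have hn2 : (2:ℝ) ≤ (n:ℝ) := by exact_mod_cast hn
  have hn0 : (0:ℝ) < n := by linarith
  obtain ⟨hwm1, hwm2, hwm3⟩ := hwmax n hn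
  have hwmpos : 0 < wmax n := lt_of_lt_of_le hwbar hwm1
  set P := M n hn with hPdef
  haveI : IsProbabilityMeasure P.μ := P.prob
  set W : Fin n → ℝ := clWeight wbar β wmax n with hWdef
  have hWpos : ∀ i, 0 < W i := fun i =>
    clWeight_pos hwbar hβl hβu hwmpos (by omega) i
  have hWmax : ∀ i, W i ≤ wmax n := fun i =>
    clWeight_le_wmax hwbar hβl hβu hwmpos (by omega) i
  have hnw : (0:ℝ) < (n:ℝ) * wbar := by positivity
  have hprodw : W u * W v ≤ (n:ℝ) * wbar := by
    have h1 : W u * W v ≤ wmax n * wmax n :=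
      mul_le_mul (hWmax u) (hWmax v) (hWpos v).le hwmpos.le
    have h2 : wmax n * wmax n ≤ Real.sqrt ((n:ℝ) * wbar) * Real.sqrt ((n:ℝ) * wbar) :=
      mul_le_mul hwm2 hwm2 hwmpos.le (Real.sqrt_nonneg _)
    have h3 : Real.sqrt ((n:ℝ) * wbar) * Real.sqrt ((n:ℝ) * wbar) = (n:ℝ) * wbar :=
      Real.mul_self_sqrt hnw.le
    linarith
  set Tb : ℝ := (1 + 2 * (1/8 : ℝ)) * (n:ℝ) ^ γ with hTbdef
  have hnγ : (0:ℝ) < (n:ℝ) ^ γ := Real.rpow_pos_of_pos hn0 γ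
  have hTb : 0 < Tb := by rw [hTbdef]; positivity
  set t : ℝ := 4 * kappa wbar β * (n:ℝ) ^ (γ * (3 - β)) * s ^ 2 with htdef
  set mubar : ℝ := kappa wbar β * (n:ℝ) ^ (γ * (3 - β)) * s ^ 2 with hmubardef
  have hmubar0 : 0 < mubar := by
    rw [hmubardef]
    have := Real.rpow_pos_of_pos hn0 (γ * (3 - β))
    positivity
  have ht4 : t = 4 * mubar := by rw [htdef, hmubardef]; ring
  have ht0 : 0 < t := by rw [ht4]; linarith
  set Tn : ℕ := ⌊t⌋₊ + 1 with hTndef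
  set J : Finset (Fin n) := Finset.univ.filter (fun i => i ≠ u ∧ i ≠ v ∧ W i ≤ Tb) with hJdef
  set p : Fin n → ℝ := fun i =>
    W u * W i / ((n:ℝ) * wbar) * s * (W v * W i / ((n:ℝ) * wbar) * s) with hpdef
  have hp0 : ∀ i, 0 ≤ p i := by
    intro i
    have h1 := (hWpos u).le
    have h2 := (hWpos v).le
    have h3 := (hWpos i).le
    simp only [hpdef]
    positivity
  set E' : Fin n → Set (Ω n) := fun i =>
    (P.A (s(u, i)) ∩ P.B 0 (s(u, i))) ∩
      (P.A (s(v, i)) ∩ P.B 1 (s(v, i))) with hE'def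
  -- Step 2: independence product formula
  have hSprod : ∀ S : Finset (Fin n), S ⊆ J →
      P.μ (⋂ i ∈ S, E' i) = ENNReal.ofReal (∏ i ∈ S, p i) := by
    intro S hSJ
    have hmem : ∀ i ∈ S, i ≠ u ∧ i ≠ v := by
      intro i hi
      have h := hSJ hi
      rw [hJdef, Finset.mem_filter] at h
      exact ⟨h.2.1, h.2.2.1⟩
    set σ : Fin n → Finset (Sym2 (Fin n) × Option (Fin 2)) := fun i =>
      {(s(u, i), none), (s(u, i), some 0),
       (s(v, i), none), (s(v, i), some 1)} with hσdef
    set F : Sym2 (Fin n) × Option (Fin 2) → Set (Ω n) :=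
      fun pz => pz.2.elim (P.A pz.1) (fun j => P.B j pz.1) with hFdef
    have hEσ : ∀ i ∈ S, E' i = ⋂ x ∈ σ i, F x := by
      intro i hi
      simp only [hσdef, Finset.set_biInter_insert, Finset.set_biInter_singleton,
        hFdef, hE'def, Option.elim]
      ext ω
      simp only [Set.mem_inter_iff]
      tauto
    have hdisj : Set.PairwiseDisjoint (↑S) σ := by
      intro x hx y hy hxy
      obtain ⟨hxu, hxv⟩ := hmem x hx
      obtain ⟨hyu, hyv⟩ := hmem y hy
      exact sigma_disjoint u v x y huv hxu hxv hyu hyv hxy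
    have hfour : ∀ i ∈ S, ∏ x ∈ σ i, P.μ (F x) = ENNReal.ofReal (p i) := by
      intro i hi
      obtain ⟨hiu, hiv⟩ := hmem i hi
      have hui : u ≠ i := Ne.symm hiu
      have hvi : v ≠ i := Ne.symm hiv
      have hd1 : ((s(u, i), (none : Option (Fin 2)))) ∉
          ({(s(u, i), some 0), (s(v, i), none),
            (s(v, i), some 1)} : Finset (Sym2 (Fin n) × Option (Fin 2))) := by
        simp only [Finset.mem_insert, Finset.mem_singleton, Prod.mk.injEq, Sym2.eq_iff]
        tauto
      have hd2 : ((s(u, i), (some 0 : Option (Fin 2)))) ∉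
          ({(s(v, i), none), (s(v, i), some 1)} :
            Finset (Sym2 (Fin n) × Option (Fin 2))) := by
        simp only [Finset.mem_insert, Finset.mem_singleton, Prod.mk.injEq, Sym2.eq_iff]
        tauto
      have hd3 : ((s(v, i), (none : Option (Fin 2)))) ∉
          ({(s(v, i), some 1)} : Finset (Sym2 (Fin n) × Option (Fin 2))) := by
        simp only [Finset.mem_singleton, Prod.mk.injEq, Sym2.eq_iff]
        tauto
      rw [hσdef]
      simp only []
      rw [Finset.prod_insert hd1, Finset.prod_insert hd2, Finset.prod_insert hd3,
        Finset.prod_singleton]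
      have e1 : F (s(u, i), none) = P.A (s(u, i)) := rfl
      have e2 : F (s(u, i), some 0) = P.B 0 (s(u, i)) := rfl
      have e3 : F (s(v, i), none) = P.A (s(v, i)) := rfl
      have e4 : F (s(v, i), some 1) = P.B 1 (s(v, i)) := rfl
      rw [e1, e2, e3, e4, P.hA u i hui, P.hB 0 u i hui, P.hA v i hvi, P.hB 1 v i hvi]
      have hx1 : (0:ℝ) ≤ clWeight wbar β wmax n u * clWeight wbar β wmax n i /
          ((n:ℝ) * wbar) := by
        have h1 := (hWpos u).le
        have h2 := (hWpos i).le
        rw [hWdef] at h1 h2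
        positivity
      have hx2 : (0:ℝ) ≤ clWeight wbar β wmax n v * clWeight wbar β wmax n i /
          ((n:ℝ) * wbar) := by
        have h1 := (hWpos v).le
        have h2 := (hWpos i).le
        rw [hWdef] at h1 h2
        positivity
      have hps : p i = clWeight wbar β wmax n u * clWeight wbar β wmax n i /
          ((n:ℝ) * wbar) * (s * (clWeight wbar β wmax n v * clWeight wbar β wmax n i /
          ((n:ℝ) * wbar) * s)) := by
        simp only [hpdef, hWdef]
        ring
      rw [hps, ENNReal.ofReal_mul hx1, ENNReal.ofReal_mul hs0.le, ENNReal.ofReal_mul hx2]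
    calc P.μ (⋂ i ∈ S, E' i) = P.μ (⋂ x ∈ S.biUnion σ, F x) := by
          rw [Finset.set_biInter_biUnion]
          exact congrArg _ (Set.iInter₂_congr hEσ)
      _ = ∏ x ∈ S.biUnion σ, P.μ (F x) := P.indep.meas_biInter _
      _ = ∏ i ∈ S, ∏ x ∈ σ i, P.μ (F x) := Finset.prod_biUnion hdisj
      _ = ∏ i ∈ S, ENNReal.ofReal (p i) := Finset.prod_congr rfl hfour
      _ = ENNReal.ofReal (∏ i ∈ S, p i) :=
          (ENNReal.ofReal_prod_of_nonneg (fun i _ => hp0 i)).symm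
  -- Step 1: covering
  have hcover : {ω | ((((P.G 0 ω).neighborSet u ∩ (P.G 1 ω).neighborSet v ∩
        {i : Fin n | W i ≤ Tb}).ncard : ℝ) ≤ t)}ᶜ ⊆
      ⋃ S ∈ Finset.powersetCard Tn J, ⋂ i ∈ S, E' i := by
    intro ω hω
    rw [Set.mem_compl_iff, Set.mem_setOf_eq, not_le] at hω
    set X : Set (Fin n) := (P.G 0 ω).neighborSet u ∩ (P.G 1 ω).neighborSet v ∩
      {i : Fin n | W i ≤ Tb} with hXdef
    set Fs : Finset (Fin n) := J.filter (fun i => ω ∈ E' i) with hFsdef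
    have hXF : X ⊆ ↑Fs := by
      intro i hi
      obtain ⟨⟨h1, h2⟩, h3⟩ := hi
      rw [SimpleGraph.mem_neighborSet] at h1 h2
      obtain ⟨hu1, hA1, hB1⟩ := (P.hG 0 ω u i).mp h1
      obtain ⟨hv1, hA2, hB2⟩ := (P.hG 1 ω v i).mp h2
      rw [hFsdef, Finset.coe_filter]
      refine ⟨?_, ⟨hA1, hB1⟩, hA2, hB2⟩
      rw [hJdef, Finset.mem_filter]
      exact ⟨Finset.mem_univ _, Ne.symm hu1, Ne.symm hv1, h3⟩
    have hTle : Tn ≤ Fs.card := by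
      have h5 : X.ncard ≤ Fs.card := by
        rw [← Set.ncard_coe_finset Fs]
        exact Set.ncard_le_ncard hXF (Finset.finite_toSet Fs)
      have h6 : ⌊t⌋₊ < X.ncard := by
        rw [Nat.floor_lt ht0.le]
        exact hω
      omega
    obtain ⟨S, hSF, hScard⟩ := Finset.exists_subset_card_eq hTle
    refine Set.mem_biUnion
      (Finset.mem_powersetCard.mpr ⟨hSF.trans (Finset.filter_subset _ _), hScard⟩) ?_
    exact Set.mem_iInter₂.mpr fun i hi => (Finset.mem_filter.mp (hSF hi)).2
  -- Step 4: expectation bound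
  have hsump : ∑ i ∈ J, p i ≤ mubar := by
    set cb : ℝ := ((β - 2) * wbar / (β - 1)) ^ (β - 1) with hcbdef
    have hcb : 0 < cb := Real.rpow_pos_of_pos (by positivity) _
    have hsumW : ∑ i ∈ J, W i ^ 2 ≤
        (2:ℝ) ^ (β - 1) * ((n:ℝ) * cb) * Tb ^ (2 - (β - 1)) / (1 - (2:ℝ) ^ (β - 1 - 2)) := by
      refine dyadic_sum J W Tb ((n:ℝ) * cb) (β - 1) hTb (by positivity)
        (by linarith) (by linarith) ?_ ?_
      · intro i hi
        rw [hJdef, Finset.mem_filter] at hi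
        exact ⟨hWpos i, hi.2.2.2⟩
      · intro α hα
        calc ((J.filter fun i => α < W i).card : ℝ)
            ≤ ((Finset.univ.filter fun i => α < W i).card : ℝ) := by
              exact_mod_cast Finset.card_le_card
                (Finset.filter_subset_filter _ (Finset.subset_univ J))
          _ ≤ (n:ℝ) * ((β - 2) * wbar / (β - 1)) ^ (β - 1) * α⁻¹ ^ (β - 1) := by
              rw [hWdef]
              exact clWeight_count hwbar hβl hβu hwmpos (by omega) α hα
          _ = (n:ℝ) * cb * α⁻¹ ^ (β - 1) := by rw [hcbdef]
    rw [show (2:ℝ) - (β - 1) = 3 - β by ring, show β - 1 - 2 = β - 3 by ring] at hsumW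
    have hstep1 : ∀ i ∈ J, p i ≤ s ^ 2 * W i ^ 2 / ((n:ℝ) * wbar) := by
      intro i _
      have h1 : p i = (W u * W v) * (W i ^ 2 * s ^ 2 / ((n:ℝ) * wbar) ^ 2) := by
        simp only [hpdef]; ring
      have h2 : (W u * W v) * (W i ^ 2 * s ^ 2 / ((n:ℝ) * wbar) ^ 2) ≤
          ((n:ℝ) * wbar) * (W i ^ 2 * s ^ 2 / ((n:ℝ) * wbar) ^ 2) := by
        apply mul_le_mul_of_nonneg_right hprodw
        have := (hWpos i).le
        positivity
      have h3 : ((n:ℝ) * wbar) * (W i ^ 2 * s ^ 2 / ((n:ℝ) * wbar) ^ 2) =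
          s ^ 2 * W i ^ 2 / ((n:ℝ) * wbar) := by
        field_simp
      rw [h1, ← h3]
      exact h2
    have hg0 : (0:ℝ) < (2:ℝ) ^ (3 - β) := Real.rpow_pos_of_pos two_pos _
    have hgm1 : (0:ℝ) < (2:ℝ) ^ (3 - β) - 1 := by linarith
    have hb1 : (0:ℝ) < (2:ℝ) ^ (β - 1) := Real.rpow_pos_of_pos two_pos _
    have hF2 : (2:ℝ) ^ (β - 3) = ((2:ℝ) ^ (3 - β))⁻¹ := by
      rw [← Real.rpow_neg two_pos.le]
      norm_num
    have hF3 : (2:ℝ) ^ (β - 1) * (2:ℝ) ^ (3 - β) = 4 := by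
      rw [← Real.rpow_add two_pos, show β - 1 + (3 - β) = (2:ℝ) by ring,
        show (2:ℝ) = ((2:ℕ):ℝ) by norm_num, Real.rpow_natCast]
      norm_num
    have hF1 : Tb ^ (3 - β) = (5/4:ℝ) ^ (3 - β) * (n:ℝ) ^ (γ * (3 - β)) := by
      rw [hTbdef, show (1 + 2 * (1/8 : ℝ)) = (5/4:ℝ) by norm_num,
        Real.mul_rpow (by norm_num) (Real.rpow_nonneg hn0.le _),
        ← Real.rpow_mul hn0.le]
    have h54 : (0:ℝ) < (5/4:ℝ) ^ (3 - β) := Real.rpow_pos_of_pos (by norm_num) _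
    have hnc : (0:ℝ) < (n:ℝ) ^ (γ * (3 - β)) := Real.rpow_pos_of_pos hn0 _
    set D : ℝ := s ^ 2 * cb * (n:ℝ) ^ (γ * (3 - β)) / (((2:ℝ) ^ (3 - β) - 1) * wbar)
      with hDdef
    have hD0 : 0 ≤ D := by rw [hDdef]; positivity
    have e1 : s ^ 2 / ((n:ℝ) * wbar) *
        ((2:ℝ) ^ (β - 1) * ((n:ℝ) * cb) * Tb ^ (3 - β) / (1 - (2:ℝ) ^ (β - 3))) =
        D * (4 * (5/4:ℝ) ^ (3 - β)) := by
      rw [hF1, hF2, hDdef]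
      have h1mg : 1 - ((2:ℝ) ^ (3 - β))⁻¹ = ((2:ℝ) ^ (3 - β) - 1) / (2:ℝ) ^ (3 - β) := by
        field_simp
      rw [h1mg]
      field_simp
      linear_combination hF3
    have e2 : mubar = D * ((1 + 2 * (1/8 : ℝ)) ^ 2 * (2:ℝ) ^ (5 - β) *
        ((2:ℝ) ^ (β - 1) - 1)) := by
      rw [hmubardef, hDdef]
      unfold kappa Cconst
      rw [← hcbdef]
      field_simp
    have coef : 4 * (5/4:ℝ) ^ (3 - β) ≤
        (1 + 2 * (1/8 : ℝ)) ^ 2 * (2:ℝ) ^ (5 - β) * ((2:ℝ) ^ (β - 1) - 1) := by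
      have c1 : (5/4:ℝ) ^ (3 - β) ≤ (5/4:ℝ) ^ (2:ℝ) :=
        Real.rpow_le_rpow_of_exponent_le (by norm_num) (by linarith)
      have c2 : (5/4:ℝ) ^ (2:ℝ) = 25/16 := by
        rw [show (2:ℝ) = ((2:ℕ):ℝ) by norm_num, Real.rpow_natCast]; norm_num
      have c3 : (4:ℝ) ≤ (2:ℝ) ^ (5 - β) := by
        calc (4:ℝ) = (2:ℝ) ^ (2:ℝ) := by
              rw [show (2:ℝ) = ((2:ℕ):ℝ) by norm_num, Real.rpow_natCast]; norm_num
          _ ≤ _ := Real.rpow_le_rpow_of_exponent_le one_le_two (by linarith)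
      have c4 : (2:ℝ) ≤ (2:ℝ) ^ (β - 1) := by
        calc (2:ℝ) = (2:ℝ) ^ (1:ℝ) := (Real.rpow_one 2).symm
          _ ≤ _ := Real.rpow_le_rpow_of_exponent_le one_le_two (by linarith)
      have c6 : (4:ℝ) ≤ (2:ℝ) ^ (5 - β) * ((2:ℝ) ^ (β - 1) - 1) := by
        calc (4:ℝ) = 4 * 1 := by norm_num
          _ ≤ (2:ℝ) ^ (5 - β) * ((2:ℝ) ^ (β - 1) - 1) :=
              mul_le_mul c3 (by linarith only [c4]) (by norm_num)
                (Real.rpow_pos_of_pos two_pos _).le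
      calc 4 * (5/4:ℝ) ^ (3 - β) ≤ 25/4 := by linarith only [c1, c2]
        _ = (25/16) * 4 := by norm_num
        _ ≤ (25/16) * ((2:ℝ) ^ (5 - β) * ((2:ℝ) ^ (β - 1) - 1)) :=
            mul_le_mul_of_nonneg_left c6 (by norm_num)
        _ = (1 + 2 * (1/8 : ℝ)) ^ 2 * (2:ℝ) ^ (5 - β) * ((2:ℝ) ^ (β - 1) - 1) := by
            rw [show (1 + 2 * (1/8 : ℝ)) ^ 2 = 25/16 by norm_num]
            ring
    calc ∑ i ∈ J, p i ≤ ∑ i ∈ J, s ^ 2 * W i ^ 2 / ((n:ℝ) * wbar) :=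
          Finset.sum_le_sum hstep1
      _ = s ^ 2 / ((n:ℝ) * wbar) * ∑ i ∈ J, W i ^ 2 := by
          rw [Finset.mul_sum]
          exact Finset.sum_congr rfl fun i _ => by ring
      _ ≤ s ^ 2 / ((n:ℝ) * wbar) *
          ((2:ℝ) ^ (β - 1) * ((n:ℝ) * cb) * Tb ^ (3 - β) / (1 - (2:ℝ) ^ (β - 3))) := by
          apply mul_le_mul_of_nonneg_left hsumW (by positivity)
      _ = D * (4 * (5/4:ℝ) ^ (3 - β)) := e1
      _ ≤ D * ((1 + 2 * (1/8 : ℝ)) ^ 2 * (2:ℝ) ^ (5 - β) * ((2:ℝ) ^ (β - 1) - 1)) :=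
          mul_le_mul_of_nonneg_left coef hD0
      _ = mubar := e2.symm
  -- Step 3: Chernoff-type bound
  have hsum : ∑ S ∈ Finset.powersetCard Tn J, ∏ i ∈ S, p i ≤
      ((2:ℝ) ^ Tn)⁻¹ * Real.exp (2 * ∑ i ∈ J, p i) := by
    have ha : ∀ S ∈ Finset.powersetCard Tn J,
        ∏ i ∈ S, p i = ((2:ℝ) ^ Tn)⁻¹ * ∏ i ∈ S, (2 * p i) := by
      intro S hS
      obtain ⟨hSJ, hcard⟩ := Finset.mem_powersetCard.mp hS
      have hsplit : ∏ i ∈ S, ((2:ℝ) * p i) = (∏ _i ∈ S, (2:ℝ)) * ∏ i ∈ S, p i :=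
        Finset.prod_mul_distrib
      rw [hsplit, Finset.prod_const, hcard]
      field_simp
    rw [Finset.sum_congr rfl ha, ← Finset.mul_sum]
    refine mul_le_mul_of_nonneg_left ?_ (by positivity)
    calc ∑ S ∈ Finset.powersetCard Tn J, ∏ i ∈ S, (2 * p i)
        ≤ ∑ S ∈ J.powerset, ∏ i ∈ S, (2 * p i) := by
          apply Finset.sum_le_sum_of_subset_of_nonneg
          · intro S hS
            exact Finset.mem_powerset.mpr (Finset.mem_powersetCard.mp hS).1
          · intro S _ _
            exact Finset.prod_nonneg fun i _ => by have := hp0 i; linarith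
      _ = ∏ i ∈ J, (2 * p i + 1) := by
          rw [Finset.prod_add]
          refine (Finset.sum_congr rfl fun S _ => ?_).symm
          simp
      _ ≤ ∏ i ∈ J, Real.exp (2 * p i) := by
          refine Finset.prod_le_prod (fun i _ => by have := hp0 i; linarith)
            (fun i _ => Real.add_one_le_exp _)
      _ = Real.exp (∑ i ∈ J, 2 * p i) := (Real.exp_sum _ _).symm
      _ = Real.exp (2 * ∑ i ∈ J, p i) := by rw [← Finset.mul_sum]
  have hfinal : ((2:ℝ) ^ Tn)⁻¹ * Real.exp (2 * ∑ i ∈ J, p i) ≤ ((n:ℝ) ^ 4)⁻¹ := by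
    have hlog2 : (0.6931471803:ℝ) < Real.log 2 := Real.log_two_gt_d9
    have hTnge : t ≤ (Tn:ℝ) := by
      rw [hTndef]
      push_cast
      linarith [Nat.lt_floor_add_one t]
    have hmu8 : 8 * Real.log n ≤ mubar := by rw [hmubardef]; exact hN₀ n hnN₀
    have hlogn : 0 ≤ Real.log n := Real.log_nonneg (by linarith)
    have h2T : ((2:ℝ) ^ Tn)⁻¹ = Real.exp (-((Tn:ℝ) * Real.log 2)) := by
      rw [Real.exp_neg, ← Real.log_pow, Real.exp_log (by positivity)]
    have hn4 : ((n:ℝ) ^ 4)⁻¹ = Real.exp (-(4 * Real.log n)) := by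
      rw [Real.exp_neg, show (4:ℝ) * Real.log n = ((4:ℕ):ℝ) * Real.log n by norm_num,
        ← Real.log_pow, Real.exp_log (by positivity)]
    rw [h2T, ← Real.exp_add, hn4]
    apply Real.exp_le_exp.mpr
    have hT4 : 4 * mubar ≤ (Tn:ℝ) := by rw [← ht4]; exact hTnge
    have hyp1 : 4 * mubar * Real.log 2 ≤ (Tn:ℝ) * Real.log 2 :=
      mul_le_mul_of_nonneg_right hT4 (by linarith)
    have hyp2 : (0.6931471803:ℝ) * mubar ≤ Real.log 2 * mubar :=
      mul_le_mul_of_nonneg_right hlog2.le hmubar0.le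
    linarith only [hsump, hyp1, hyp2, hmubar0.le, hlogn, hmu8]
  -- assembling
  have hbad : P.μ ({ω | ((((P.G 0 ω).neighborSet u ∩ (P.G 1 ω).neighborSet v ∩
        {i : Fin n | W i ≤ Tb}).ncard : ℝ) ≤ t)}ᶜ) ≤ ENNReal.ofReal (((n:ℝ) ^ 4)⁻¹) := by
    calc P.μ ({ω | ((((P.G 0 ω).neighborSet u ∩ (P.G 1 ω).neighborSet v ∩
            {i : Fin n | W i ≤ Tb}).ncard : ℝ) ≤ t)}ᶜ)
        ≤ P.μ (⋃ S ∈ Finset.powersetCard Tn J, ⋂ i ∈ S, E' i) := measure_mono hcover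
      _ ≤ ∑ S ∈ Finset.powersetCard Tn J, P.μ (⋂ i ∈ S, E' i) :=
          measure_biUnion_finset_le _ _
      _ = ∑ S ∈ Finset.powersetCard Tn J, ENNReal.ofReal (∏ i ∈ S, p i) :=
          Finset.sum_congr rfl fun S hS => hSprod S (Finset.mem_powersetCard.mp hS).1
      _ = ENNReal.ofReal (∑ S ∈ Finset.powersetCard Tn J, ∏ i ∈ S, p i) :=
          (ENNReal.ofReal_sum_of_nonneg
            (fun S _ => Finset.prod_nonneg fun i _ => hp0 i)).symm
      _ ≤ ENNReal.ofReal (((n:ℝ) ^ 4)⁻¹) :=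
          ENNReal.ofReal_le_ofReal (hsum.trans hfinal)
  set Good : Set (Ω n) := {ω | ((((P.G 0 ω).neighborSet u ∩ (P.G 1 ω).neighborSet v ∩
      {i : Fin n | W i ≤ Tb}).ncard : ℝ) ≤ t)} with hGooddef
  have h1 : (1 : ENNReal) ≤ P.μ Good + ENNReal.ofReal (((n:ℝ) ^ 4)⁻¹) := by
    calc (1 : ENNReal) = P.μ Set.univ := measure_univ.symm
      _ = P.μ (Good ∪ Goodᶜ) := by rw [Set.union_compl_self]
      _ ≤ P.μ Good + P.μ (Goodᶜ) := measure_union_le _ _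
      _ ≤ _ := add_le_add_right hbad _
  have h2 : P.μ Good ≠ ⊤ := measure_ne_top _ _
  have h3 : P.μ Good + ENNReal.ofReal (((n:ℝ) ^ 4)⁻¹) ≠ ⊤ :=
    ENNReal.add_ne_top.mpr ⟨h2, ENNReal.ofReal_ne_top⟩
  have h4 := ENNReal.toReal_mono h3 h1
  rw [ENNReal.toReal_add h2 ENNReal.ofReal_ne_top, ENNReal.toReal_one,
    ENNReal.toReal_ofReal (by positivity)] at h4
  linarith
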